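/- Let G be a finite abelian group, H ≤ G a subgroup, and let φ : Ĝ → Ĥ be the restriction map on characters. Let S ⊆ H and T ⊆ Ĥ be nonempty. Then S and T are formally dual (as subsets of H and Ĥ) if and only if S ⊆ G and φ⁻¹(T) ⊆ Ĝ are formally dual (as subsets of G and Ĝ). -/

import Mathlib

open scoped Classical

/-- Formal duality condition for `S ⊆ G` and `T ⊆ Ĝ` (with the roles of the two groups as in
Lemma `liftingequiv`): for all `x ∈ G`,
`|(1/|T|) ∑_{w ∈ T} w(x)|² = (1/|S|)·#{(v,v') ∈ S × S : x = v - v'}`.  Here the dual group `Ĝ`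
is realized as the group `AddChar G ℂ` of complex-valued characters, written additively. -/
def IsFormallyDual {G : Type*} [AddCommGroup G] [Fintype G]
    (S : Finset G) (T : Finset (AddChar G ℂ)) : Prop :=
  ∀ x : G,
    ‖(T.card : ℂ)⁻¹ * ∑ w ∈ T, w x‖ ^ 2 =
      (S.card : ℝ)⁻¹ * ((S ×ˢ S).filter fun p => x = p.1 - p.2).card

/-! Restriction `Ĝ → Ĥ` is surjective (its kernel consists of the characters of `G ⧸ H`, so it is
small enough), hence every fibre has the size of the kernel. For `x ∈ H` the character sum over
`φ⁻¹(T)` is therefore that constant times the sum over `T`, and the constant cancels against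
`|φ⁻¹(T)|`. For `x ∉ H` some character `χ` trivial on `H` has `χ x ≠ 1`; translation by `χ`
preserves `φ⁻¹(T)`, so the character sum vanishes, and so does the difference count of `S`. -/

open Finset Function

lemma AddMonoidHom.sum_filter_map_mem {A B M : Type*} [AddGroup A] [Fintype A] [AddMonoid B]
    [DecidableEq B] [AddCommMonoid M] (f : A →+ B) (hf : Surjective f) (T : Finset B)
    (g : B → M) : ∑ a with f a ∈ T, g (f a) = #{a | f a = 0} • ∑ b ∈ T, g b := by
  rw [← sum_fiberwise_of_maps_to (g := f) fun a ha => (mem_filter.1 ha).2, smul_sum]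
  refine sum_congr rfl fun b hb => ?_
  have hfiber : ((univ.filter (f · ∈ T)).filter (f · = b)) = univ.filter (f · = b) := by
    ext a; simp only [mem_filter, mem_univ, true_and, and_iff_right_iff_imp]; rintro rfl; exact hb
  rw [hfiber, sum_congr rfl fun a ha => by rw [(mem_filter.1 ha).2], sum_const,
    AddMonoidHom.card_fiber_eq_of_mem_range f (hf b) (hf 0)]

-- No `DecidableEq` binders here: the classical instances are needed to match those inside
-- `IsFormallyDual`, also when `A` is a subgroup.
lemma card_filter_eq_sub_image_product {A B : Type*} [AddGroup A] [AddGroup B] (f : A →+ B)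
    (hf : Injective f) (S : Finset A) (a : A) :
    #{p ∈ S.image f ×ˢ S.image f | f a = p.1 - p.2} = #{p ∈ S ×ˢ S | a = p.1 - p.2} := by
  rw [← prodMap_image_product, filter_image, card_image_of_injective _ (hf.prodMap hf)]
  simp only [Prod.map_fst, Prod.map_snd, ← map_sub, hf.eq_iff]

lemma card_filter_eq_sub_image_product_eq_zero {A B : Type*} [Sub B] (f : A → B) (S : Finset A)
    {x : B} (hx : ∀ a b, f a - f b ≠ x) : #{p ∈ S.image f ×ˢ S.image f | x = p.1 - p.2} = 0 := by
  simp only [card_eq_zero, filter_eq_empty_iff, mem_product, mem_image]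
  rintro ⟨_, _⟩ ⟨⟨a, -, rfl⟩, ⟨b, -, rfl⟩⟩ h
  exact hx a b h.symm

namespace AddChar

variable {G : Type*} [AddCommGroup G]

def restrictHom {M : Type*} [CommMonoid M] (H : AddSubgroup G) : AddChar G M →+ AddChar H M where
  toFun ψ := ψ.compAddMonoidHom H.subtype
  map_zero' := rfl
  map_add' _ _ := rfl

@[simp] lemma restrictHom_apply {M : Type*} [CommMonoid M] (H : AddSubgroup G) (ψ : AddChar G M)
    (h : H) : restrictHom H ψ h = ψ h := rfl

lemma exists_compAddMonoidHom_mk'_eq {M : Type*} [CommMonoid M] {H : AddSubgroup G}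
    {ψ : AddChar G M} (hψ : ∀ h ∈ H, ψ h = 1) :
    ∃ χ : AddChar (G ⧸ H) M, χ.compAddMonoidHom (QuotientAddGroup.mk' H) = ψ :=
  ⟨toAddMonoidHomEquiv.symm (QuotientAddGroup.lift H (toAddMonoidHomEquiv ψ)
    fun h hh => by simp [hψ h hh]), by ext; rfl⟩

lemma restrictHom_compAddMonoidHom_mk' {M : Type*} [CommMonoid M] (H : AddSubgroup G)
    (χ : AddChar (G ⧸ H) M) :
    restrictHom H (χ.compAddMonoidHom (QuotientAddGroup.mk' H)) = 0 := by
  ext h; simp [(QuotientAddGroup.eq_zero_iff _).2 h.2]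

lemma sum_apply_eq_zero_of_add_mem_iff {R : Type*} [CommRing R] [IsDomain R]
    {s : Finset (AddChar G R)} {χ : AddChar G R} (hs : ∀ ψ, χ + ψ ∈ s ↔ ψ ∈ s) {x : G}
    (hχ : χ x ≠ 1) : ∑ ψ ∈ s, ψ x = 0 := by
  have hinv : χ x * ∑ ψ ∈ s, ψ x = 1 * ∑ ψ ∈ s, ψ x := by
    rw [mul_sum, one_mul]
    exact sum_equiv (Equiv.addLeft χ) (fun ψ => (hs ψ).symm) fun ψ _ => (add_apply ..).symm
  by_contra hsum
  exact hχ (mul_right_cancel₀ hsum hinv)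

variable [Fintype G]

lemma restrictHom_surjective (H : AddSubgroup G) :
    Surjective (restrictHom H : AddChar G ℂ →+ AddChar H ℂ) := by
  refine AddMonoidHom.surjective_of_card_ker_le_div _ ?_
  let inflate (χ : AddChar (G ⧸ H) ℂ) : (restrictHom H : AddChar G ℂ →+ _).ker :=
    ⟨χ.compAddMonoidHom (QuotientAddGroup.mk' H), restrictHom_compAddMonoidHom_mk' H χ⟩
  have inflate_surjective : Surjective inflate := by
    rintro ⟨ψ, hψ⟩
    obtain ⟨χ, rfl⟩ := exists_compAddMonoidHom_mk'_eq (H := H) fun h hh =>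
      DFunLike.congr_fun hψ ⟨h, hh⟩
    exact ⟨χ, rfl⟩
  calc _ ≤ Nat.card (AddChar (G ⧸ H) ℂ) := Nat.card_le_card_of_surjective _ inflate_surjective
    _ = Nat.card G / Nat.card H := by
      rw [H.card_eq_card_quotient_mul_card_addSubgroup, Nat.mul_div_cancel _ Nat.card_pos]
      simp [Nat.card_eq_fintype_card, card_eq]
    _ = _ := by simp [Nat.card_eq_fintype_card, card_eq]

variable {H : AddSubgroup G}

lemma exists_restrictHom_eq_zero_apply_ne_one {x : G} (hx : x ∉ H) :
    ∃ χ : AddChar G ℂ, restrictHom H χ = 0 ∧ χ x ≠ 1 := by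
  obtain ⟨ψ, hψ⟩ := exists_apply_ne_zero.2 (mt (QuotientAddGroup.eq_zero_iff x).1 hx)
  exact ⟨ψ.compAddMonoidHom (QuotientAddGroup.mk' H), restrictHom_compAddMonoidHom_mk' H ψ, hψ⟩

lemma sum_filter_restrictHom_mem_apply_of_notMem (T : Finset (AddChar H ℂ)) {x : G}
    (hx : x ∉ H) : ∑ ψ : AddChar G ℂ with restrictHom H ψ ∈ T, ψ x = 0 := by
  obtain ⟨χ, hχ, hχx⟩ := exists_restrictHom_eq_zero_apply_ne_one hx
  exact sum_apply_eq_zero_of_add_mem_iff (fun ψ => by simp [hχ]) hχx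

lemma inv_card_mul_sum_filter_restrictHom_mem_apply (T : Finset (AddChar H ℂ)) (ξ : H) :
    (#{ψ : AddChar G ℂ | restrictHom H ψ ∈ T} : ℂ)⁻¹ *
        ∑ ψ : AddChar G ℂ with restrictHom H ψ ∈ T, ψ ξ =
      (#T : ℂ)⁻¹ * ∑ w ∈ T, w ξ := by
  have hc : (#{ψ : AddChar G ℂ | restrictHom H ψ = 0} : ℂ) ≠ 0 :=
    Nat.cast_ne_zero.2 (card_ne_zero.2 ⟨0, by simp⟩)
  have hcard := (restrictHom H).sum_filter_map_mem (restrictHom_surjective H) T fun _ => (1 : ℂ)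
  have hsum : ∑ ψ : AddChar G ℂ with restrictHom H ψ ∈ T, ψ ξ = _ :=
    (restrictHom H).sum_filter_map_mem (restrictHom_surjective H) T fun w => w ξ
  simp only [sum_const, nsmul_eq_mul, mul_one] at hcard
  rw [hcard, hsum, nsmul_eq_mul]
  field_simp

end AddChar

theorem stmt_8_general {G : Type*} [AddCommGroup G] [Fintype G] (H : AddSubgroup G)
    (S : Finset H) (T : Finset (AddChar H ℂ)) :
    IsFormallyDual S T ↔
      IsFormallyDual (S.image fun v : H => (v : G))
        (Finset.univ.filter fun y : AddChar G ℂ => y.compAddMonoidHom H.subtype ∈ T) := by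
  change IsFormallyDual S T ↔
    IsFormallyDual (S.image Subtype.val) {ψ | AddChar.restrictHom H ψ ∈ T}
  have hcount := card_filter_eq_sub_image_product H.subtype H.subtype_injective S
  rw [AddSubgroup.coe_subtype] at hcount
  unfold IsFormallyDual
  rw [card_image_of_injective S Subtype.val_injective]
  constructor
  · intro hST x
    by_cases hx : x ∈ H
    · lift x to H using hx
      rw [AddChar.inv_card_mul_sum_filter_restrictHom_mem_apply, hcount]
      exact hST x
    · rw [AddChar.sum_filter_restrictHom_mem_apply_of_notMem T hx,
        card_filter_eq_sub_image_product_eq_zero Subtype.val S (x := x)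
          fun a b h => hx (h ▸ sub_mem a.2 b.2)]
      simp
  · intro hST ξ
    rw [← AddChar.inv_card_mul_sum_filter_restrictHom_mem_apply, ← hcount]
    exact hST ξ

theorem stmt_8 {G : Type*} [AddCommGroup G] [Fintype G] (H : AddSubgroup G)
    (S : Finset H) (T : Finset (AddChar H ℂ))
    (hS : S.Nonempty) (hT : T.Nonempty) :
    IsFormallyDual S T ↔
      IsFormallyDual (S.image fun v : H => (v : G))
        (Finset.univ.filter fun y : AddChar G ℂ => y.compAddMonoidHom H.subtype ∈ T) :=
  stmt_8_general H S T
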